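/- arXiv:1904.10789 — 2 statements merged into one kernel-verified Lean document; each statement's English description precedes it below -/
import Mathlib

section
/- Let $(D_1,C_1)$ and $(D_2,C_2)$ be poly-tilings of $\mathbb{F}_2^n$ and $\mathbb{F}_2^m$ respectively, and suppose $D_1=B_{d_1}(0,r)$ and $D_2=B_{d_2}(0,r)$ for TS-metrics $d_1,d_2$ and a common radius $r>0$. Then $(D_1\mid D_2,\ C_1\mid C_2)$ is a poly-tiling of $\mathbb{F}_2^{n+m}$ and $D_1\mid D_2=B_{d_{\max}}(0,r)$, where $d_{\max}(x,y)=\max\{d_1(x_1,y_1),d_2(x_2,y_2)\}$ for $x=x_1\mid x_2$, $y=y_1\mid y_2$. -/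
abbrev V (n : ℕ) := Fin n → ZMod 2

/-- The support of a vector. -/
def supp {n : ℕ} (x : V n) : Set (Fin n) := {i | x i ≠ 0}

/-- `d` is a metric on `𝔽₂ⁿ`. -/
def IsMetric {n : ℕ} (d : V n → V n → ℝ) : Prop :=
  (∀ x y, 0 ≤ d x y) ∧ (∀ x y, d x y = 0 ↔ x = y) ∧
  (∀ x y, d x y = d y x) ∧ (∀ x y z, d x z ≤ d x y + d y z)

/-- `d` is translation-invariant. -/
def TransInv {n : ℕ} (d : V n → V n → ℝ) : Prop :=
  ∀ x y z : V n, d (x + z) (y + z) = d x y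

/-- The weight of `d` respects supports. -/
def RespectsSupport {n : ℕ} (d : V n → V n → ℝ) : Prop :=
  ∀ x y : V n, supp x ⊆ supp y → d x 0 ≤ d y 0

/-- A TS-metric: a translation-invariant metric respecting supports. -/
def IsTSMetric {n : ℕ} (d : V n → V n → ℝ) : Prop :=
  IsMetric d ∧ TransInv d ∧ RespectsSupport d

/-- The ball of center `x` and radius `r`. -/
def ball {n : ℕ} (d : V n → V n → ℝ) (x : V n) (r : ℝ) : Set (V n) :=
  {y | d x y ≤ r}

/-- Concatenation of a set of vectors of `𝔽₂ⁿ` with a set of vectors of `𝔽₂ᵐ`. -/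
def concatSet {n m : ℕ} (A : Set (V n)) (B : Set (V m)) : Set (V (n + m)) :=
  {z | ∃ a ∈ A, ∃ b ∈ B, z = Fin.append a b}

/-- `(D, C)` is a tiling of `𝔽₂ⁿ`. -/
def IsTiling {n : ℕ} (D C : Set (V n)) : Prop :=
  (⋃ c ∈ C, (fun x => c + x) '' D) = Set.univ ∧
  C.PairwiseDisjoint (fun c => (fun x => c + x) '' D)

/-- `γ` is a geodesic path of length `t` (for the Hamming distance). -/
def IsGeodesic {n : ℕ} (γ : ℕ → V n) (t : ℕ) : Prop :=
  (∀ i < t, hammingDist (γ i) (γ (i + 1)) = 1) ∧ hammingDist (γ 0) (γ t) = t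

/-- A polyhedromino: a nonempty set any two points of which are connected by a
geodesic path contained in the set. -/
def IsPolyhedromino {n : ℕ} (D : Set (V n)) : Prop :=
  D.Nonempty ∧ ∀ x ∈ D, ∀ y ∈ D, ∃ (t : ℕ) (γ : ℕ → V n),
    IsGeodesic γ t ∧ γ 0 = x ∧ γ t = y ∧ ∀ i ≤ t, γ i ∈ D

/-- A poly-tiling: a tiling whose tile is a polyhedromino. -/
def IsPolyTiling {n : ℕ} (D C : Set (V n)) : Prop :=
  IsTiling D C ∧ IsPolyhedromino D

/-- The first `n` coordinates of a vector of `𝔽₂ⁿ⁺ᵐ`. -/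
def fstV {n m : ℕ} (x : V (n + m)) : V n := fun i => x (Fin.castAdd m i)

/-- The last `m` coordinates of a vector of `𝔽₂ⁿ⁺ᵐ`. -/
def sndV {n m : ℕ} (x : V (n + m)) : V m := fun j => x (Fin.natAdd n j)

/-- The maximum combination of two metrics. -/
def dmax {n m : ℕ} (d₁ : V n → V n → ℝ) (d₂ : V m → V m → ℝ) :
    V (n + m) → V (n + m) → ℝ :=
  fun x y => max (d₁ (fstV x) (fstV y)) (d₂ (sndV x) (sndV y))

/-!
Splitting `x ∈ 𝔽₂ⁿ⁺ᵐ` as `fstV x ∣ sndV x` is an additive bijection under which the Hamming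
distance is additive. Hence the two tilings cover and are disjoint coordinatewise, a geodesic in
`D₁ ∣ D₂` is obtained by first running a geodesic of `D₁` and then one of `D₂`, and the ball of
`dmax` is the product of the two balls since `max a b ≤ r ↔ a ≤ r ∧ b ≤ r`.
-/

section Append

variable {n m : ℕ}

@[simp]
lemma fstV_append (a : V n) (b : V m) : fstV (Fin.append a b) = a :=
  funext fun i => Fin.append_left a b i

@[simp]
lemma sndV_append (a : V n) (b : V m) : sndV (Fin.append a b) = b :=
  funext fun j => Fin.append_right a b j

@[simp]
lemma append_fstV_sndV (x : V (n + m)) : Fin.append (fstV x) (sndV x) = x := by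
  funext i
  induction i using Fin.addCases with
  | left j => simp [fstV]
  | right j => simp [sndV]

lemma fstV_add (x y : V (n + m)) : fstV (x + y) = fstV x + fstV y := rfl

lemma sndV_add (x y : V (n + m)) : sndV (x + y) = sndV x + sndV y := rfl

lemma append_add_append (a a' : V n) (b b' : V m) :
    Fin.append a b + Fin.append a' b' = Fin.append (a + a') (b + b') := by
  funext i
  induction i using Fin.addCases with
  | left j => simp
  | right j => simp

lemma hammingDist_append (a a' : V n) (b b' : V m) :
    hammingDist (Fin.append a b) (Fin.append a' b') = hammingDist a a' + hammingDist b b' := by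
  simp only [hammingDist, Finset.card_filter, Fin.sum_univ_add, Fin.append_left, Fin.append_right]

lemma mem_concatSet {A : Set (V n)} {B : Set (V m)} {z : V (n + m)} :
    z ∈ concatSet A B ↔ fstV z ∈ A ∧ sndV z ∈ B := by
  constructor
  · rintro ⟨a, ha, b, hb, rfl⟩
    simpa using ⟨ha, hb⟩
  · rintro ⟨hA, hB⟩
    exact ⟨fstV z, hA, sndV z, hB, (append_fstV_sndV z).symm⟩

lemma append_mem_concatSet {A : Set (V n)} {B : Set (V m)} {a : V n} {b : V m} :
    Fin.append a b ∈ concatSet A B ↔ a ∈ A ∧ b ∈ B := by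
  simp [mem_concatSet]

end Append

section Tiling

variable {n m : ℕ} {D₁ C₁ : Set (V n)} {D₂ C₂ : Set (V m)}

lemma mem_translates_iff {D C : Set (V n)} {z : V n} :
    z ∈ ⋃ c ∈ C, (fun x => c + x) '' D ↔ ∃ c ∈ C, ∃ x ∈ D, c + x = z := by
  simp only [Set.mem_iUnion, Set.mem_image, exists_prop]

lemma concatSet_translates_eq_univ
    (h₁ : (⋃ c ∈ C₁, (fun x => c + x) '' D₁) = Set.univ)
    (h₂ : (⋃ c ∈ C₂, (fun x => c + x) '' D₂) = Set.univ) :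
    (⋃ c ∈ concatSet C₁ C₂, (fun x => c + x) '' concatSet D₁ D₂) = Set.univ := by
  refine Set.eq_univ_of_forall fun z => mem_translates_iff.mpr ?_
  obtain ⟨c₁, hc₁, x₁, hx₁, hz₁⟩ := mem_translates_iff.mp (h₁ ▸ Set.mem_univ (fstV z))
  obtain ⟨c₂, hc₂, x₂, hx₂, hz₂⟩ := mem_translates_iff.mp (h₂ ▸ Set.mem_univ (sndV z))
  refine ⟨Fin.append c₁ c₂, append_mem_concatSet.mpr ⟨hc₁, hc₂⟩,
    Fin.append x₁ x₂, append_mem_concatSet.mpr ⟨hx₁, hx₂⟩, ?_⟩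
  rw [append_add_append, hz₁, hz₂, append_fstV_sndV]

lemma eq_of_add_eq_add_of_pairwiseDisjoint {D C : Set (V n)}
    (h : C.PairwiseDisjoint (fun c => (fun x => c + x) '' D)) {c c' x x' : V n}
    (hc : c ∈ C) (hc' : c' ∈ C) (hx : x ∈ D) (hx' : x' ∈ D) (hsum : c + x = c' + x') :
    c = c' := by
  by_contra hne
  exact Set.disjoint_left.mp (h hc hc' hne) ⟨x, hx, rfl⟩ ⟨x', hx', hsum.symm⟩

lemma concatSet_pairwiseDisjoint
    (h₁ : C₁.PairwiseDisjoint (fun c => (fun x => c + x) '' D₁))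
    (h₂ : C₂.PairwiseDisjoint (fun c => (fun x => c + x) '' D₂)) :
    (concatSet C₁ C₂).PairwiseDisjoint (fun c => (fun x => c + x) '' concatSet D₁ D₂) := by
  rintro c hc c' hc' hne
  refine Set.disjoint_left.mpr ?_
  rintro _ ⟨x, hx, rfl⟩ ⟨x', hx', hsum⟩
  replace hsum : c + x = c' + x' := hsum.symm
  rw [mem_concatSet] at hc hc' hx hx'
  have hfst : fstV c = fstV c' :=
    eq_of_add_eq_add_of_pairwiseDisjoint h₁ hc.1 hc'.1 hx.1 hx'.1
      (by rw [← fstV_add, ← fstV_add, hsum])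
  have hsnd : sndV c = sndV c' :=
    eq_of_add_eq_add_of_pairwiseDisjoint h₂ hc.2 hc'.2 hx.2 hx'.2
      (by rw [← sndV_add, ← sndV_add, hsum])
  exact hne (by rw [← append_fstV_sndV c, hfst, hsnd, append_fstV_sndV])

lemma IsTiling.concatSet (h₁ : IsTiling D₁ C₁) (h₂ : IsTiling D₂ C₂) :
    IsTiling (concatSet D₁ D₂) (concatSet C₁ C₂) :=
  ⟨concatSet_translates_eq_univ h₁.1 h₂.1, concatSet_pairwiseDisjoint h₁.2 h₂.2⟩

end Tiling

section Geodesic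

variable {n m : ℕ}

/-- First `γ₁` runs in the first block for `t₁` steps, then `γ₂` in the second block. -/
def appendPath (γ₁ : ℕ → V n) (t₁ : ℕ) (γ₂ : ℕ → V m) : ℕ → V (n + m) :=
  fun i => Fin.append (γ₁ (min i t₁)) (γ₂ (i - t₁))

@[simp]
lemma appendPath_zero (γ₁ : ℕ → V n) (t₁ : ℕ) (γ₂ : ℕ → V m) :
    appendPath γ₁ t₁ γ₂ 0 = Fin.append (γ₁ 0) (γ₂ 0) := by
  simp [appendPath]

@[simp]
lemma appendPath_add (γ₁ : ℕ → V n) (t₁ : ℕ) (γ₂ : ℕ → V m) (t₂ : ℕ) :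
    appendPath γ₁ t₁ γ₂ (t₁ + t₂) = Fin.append (γ₁ t₁) (γ₂ t₂) := by
  simp [appendPath]

lemma hammingDist_appendPath_succ {γ₁ : ℕ → V n} {t₁ : ℕ} {γ₂ : ℕ → V m} (i : ℕ) :
    hammingDist (appendPath γ₁ t₁ γ₂ i) (appendPath γ₁ t₁ γ₂ (i + 1)) =
      if i < t₁ then hammingDist (γ₁ i) (γ₁ (i + 1))
      else hammingDist (γ₂ (i - t₁)) (γ₂ (i - t₁ + 1)) := by
  rw [appendPath, appendPath, hammingDist_append]
  split_ifs with hi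
  · rw [min_eq_left hi.le, min_eq_left hi, Nat.sub_eq_zero_of_le hi.le,
      Nat.sub_eq_zero_of_le hi, hammingDist_self, add_zero]
  · rw [min_eq_right (not_lt.mp hi), min_eq_right (by omega), Nat.sub_add_comm (not_lt.mp hi),
      hammingDist_self, zero_add]

lemma IsGeodesic.appendPath {γ₁ : ℕ → V n} {t₁ : ℕ} {γ₂ : ℕ → V m} {t₂ : ℕ}
    (h₁ : IsGeodesic γ₁ t₁) (h₂ : IsGeodesic γ₂ t₂) :
    IsGeodesic (appendPath γ₁ t₁ γ₂) (t₁ + t₂) := by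
  refine ⟨fun i hi => ?_, ?_⟩
  · rw [hammingDist_appendPath_succ]
    split_ifs with hi₁
    · exact h₁.1 i hi₁
    · exact h₂.1 _ (by omega)
  · rw [appendPath_zero, appendPath_add, hammingDist_append, h₁.2, h₂.2]

lemma IsPolyhedromino.concatSet {D₁ : Set (V n)} {D₂ : Set (V m)}
    (h₁ : IsPolyhedromino D₁) (h₂ : IsPolyhedromino D₂) :
    IsPolyhedromino (concatSet D₁ D₂) := by
  obtain ⟨⟨a, ha⟩, hpath₁⟩ := h₁
  obtain ⟨⟨b, hb⟩, hpath₂⟩ := h₂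
  refine ⟨⟨Fin.append a b, append_mem_concatSet.mpr ⟨ha, hb⟩⟩, fun x hx y hy => ?_⟩
  rw [mem_concatSet] at hx hy
  obtain ⟨t₁, γ₁, hγ₁, h0₁, ht₁, hmem₁⟩ := hpath₁ _ hx.1 _ hy.1
  obtain ⟨t₂, γ₂, hγ₂, h0₂, ht₂, hmem₂⟩ := hpath₂ _ hx.2 _ hy.2
  refine ⟨t₁ + t₂, appendPath γ₁ t₁ γ₂, hγ₁.appendPath hγ₂, ?_, ?_, fun i hi => ?_⟩
  · rw [appendPath_zero, h0₁, h0₂, append_fstV_sndV]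
  · rw [appendPath_add, ht₁, ht₂, append_fstV_sndV]
  · exact append_mem_concatSet.mpr ⟨hmem₁ _ (min_le_right _ _), hmem₂ _ (by omega)⟩

end Geodesic

lemma IsPolyTiling.concatSet {n m : ℕ} {D₁ C₁ : Set (V n)} {D₂ C₂ : Set (V m)}
    (h₁ : IsPolyTiling D₁ C₁) (h₂ : IsPolyTiling D₂ C₂) :
    IsPolyTiling (concatSet D₁ D₂) (concatSet C₁ C₂) :=
  ⟨h₁.1.concatSet h₂.1, h₁.2.concatSet h₂.2⟩

lemma ball_dmax {n m : ℕ} (d₁ : V n → V n → ℝ) (d₂ : V m → V m → ℝ) (x : V (n + m)) (r : ℝ) :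
    ball (dmax d₁ d₂) x r = concatSet (ball d₁ (fstV x) r) (ball d₂ (sndV x) r) := by
  ext z
  simp only [mem_concatSet, ball, dmax, Set.mem_ofPred_eq, max_le_iff]

theorem stmt_11_general {n m : ℕ} (D₁ C₁ : Set (V n)) (D₂ C₂ : Set (V m))
    (d₁ : V n → V n → ℝ) (d₂ : V m → V m → ℝ) (r : ℝ)
    (ht₁ : IsPolyTiling D₁ C₁) (ht₂ : IsPolyTiling D₂ C₂)
    (hD₁ : D₁ = ball d₁ 0 r) (hD₂ : D₂ = ball d₂ 0 r) :
    IsPolyTiling (concatSet D₁ D₂) (concatSet C₁ C₂) ∧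
      concatSet D₁ D₂ = ball (dmax d₁ d₂) 0 r :=
  ⟨ht₁.concatSet ht₂, by rw [ball_dmax, hD₁, hD₂]; rfl⟩

theorem stmt_11 {n m : ℕ} (D₁ C₁ : Set (V n)) (D₂ C₂ : Set (V m))
    (d₁ : V n → V n → ℝ) (d₂ : V m → V m → ℝ) (r : ℝ)
    (ht₁ : IsPolyTiling D₁ C₁) (ht₂ : IsPolyTiling D₂ C₂)
    (hd₁ : IsTSMetric d₁) (hd₂ : IsTSMetric d₂) (hr : 0 < r)
    (hD₁ : D₁ = ball d₁ 0 r) (hD₂ : D₂ = ball d₂ 0 r) :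
    IsPolyTiling (concatSet D₁ D₂) (concatSet C₁ C₂) ∧
      concatSet D₁ D₂ = ball (dmax d₁ d₂) 0 r :=
  stmt_11_general D₁ C₁ D₂ C₂ d₁ d₂ r ht₁ ht₂ hD₁ hD₂
end

section
/- There is no covering $\mathcal{F}'$ of $[6]$ such that $B_{d_{\mathcal{F}'}}(0,2)=B_{d_H}(0,3)$ in $\mathbb{F}_2^6$, where $d_H$ is the Hamming metric; i.e., no combinatorial metric on $\mathbb{F}_2^6$ has its ball of radius $2$ about the origin equal to the Hamming ball of radius $3$ about the origin. -/
/-- `F` is a covering of the coordinate set. -/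
def IsCovering {n : ℕ} (F : Set (Set (Fin n))) : Prop := ⋃₀ F = Set.univ

/-- The combinatorial weight associated with a family `F`. -/
noncomputable def combWeight {n : ℕ} (F : Set (Set (Fin n))) (x : V n) : ℕ :=
  sInf {k | ∃ A : Finset (Set (Fin n)), ↑A ⊆ F ∧
    supp x ⊆ ⋃₀ (↑A : Set (Set (Fin n))) ∧ A.card = k}

/-- The combinatorial metric associated with `F`. -/
noncomputable def combDist {n : ℕ} (F : Set (Set (Fin n))) (x y : V n) : ℕ :=
  combWeight F (x - y)

/-- The ball of the combinatorial metric. -/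
def combBall {n : ℕ} (F : Set (Set (Fin n))) (x : V n) (r : ℕ) : Set (V n) :=
  {y | combDist F x y ≤ r}

/-- The Hamming ball of center `x` and radius `r`. -/
def hammingBall {n : ℕ} (x : V n) (r : ℕ) : Set (V n) :=
  {y | hammingDist x y ≤ r}

open Finset

theorem Finset.exists_subset_card_eq_two_subset_of_card_lt {α : Type*} [DecidableEq α]
    {𝒜 : Finset (Set α)} {S : Finset α} (hS : ↑S ⊆ ⋃₀ (↑𝒜 : Set (Set α)))
    (hcard : #𝒜 < #S) : ∃ A ∈ 𝒜, ∃ T ⊆ S, #T = 2 ∧ ↑T ⊆ A := by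
  choose! f hf𝒜 hfi using fun i (hi : i ∈ S) => hS hi
  obtain ⟨i, hi, j, hj, hij, hfij⟩ :=
    exists_ne_map_eq_of_card_lt_of_maps_to hcard fun i hi => hf𝒜 i hi
  refine ⟨f i, hf𝒜 i hi, {i, j}, by simp [insert_subset_iff, hi, hj], card_pair hij, ?_⟩
  simp only [coe_insert, coe_singleton, Set.insert_subset_iff, Set.singleton_subset_iff]
  exact ⟨hfi i hi, hfij ▸ hfi j hj⟩

section CombinatorialMetric

variable {n : ℕ}

def indicatorVector (S : Finset (Fin n)) : V n := fun i => if i ∈ S then 1 else 0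

@[simp]
theorem supp_indicatorVector (S : Finset (Fin n)) : supp (indicatorVector S) = ↑S := by
  ext i
  simp [supp, indicatorVector]

theorem mem_hammingBall_zero_indicatorVector {S : Finset (Fin n)} {r : ℕ} :
    indicatorVector S ∈ hammingBall 0 r ↔ #S ≤ r := by
  simp only [hammingBall, Set.mem_ofPred_eq, hammingDist_zero_left, hammingNorm]
  congr! 2
  ext i
  simp [indicatorVector]

theorem mem_combBall_zero {F : Set (Set (Fin n))} {x : V n} {r : ℕ} :
    x ∈ combBall F 0 r ↔ combWeight F x ≤ r := by
  have hsupp : supp (-x) = supp x := by ext i; simp [supp]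
  simp [combBall, combDist, combWeight, hsupp]

theorem combWeight_le_card {F : Set (Set (Fin n))} {x : V n} {𝒜 : Finset (Set (Fin n))}
    (h𝒜 : ↑𝒜 ⊆ F) (hx : supp x ⊆ ⋃₀ (↑𝒜 : Set (Set (Fin n)))) :
    combWeight F x ≤ #𝒜 :=
  Nat.sInf_le ⟨𝒜, h𝒜, hx, rfl⟩

theorem exists_card_eq_combWeight {F : Set (Set (Fin n))} (hF : IsCovering F) (x : V n) :
    ∃ 𝒜 : Finset (Set (Fin n)), ↑𝒜 ⊆ F ∧ supp x ⊆ ⋃₀ (↑𝒜 : Set (Set (Fin n))) ∧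
      #𝒜 = combWeight F x := by
  classical
  choose f hfF hfi using fun i : Fin n => Set.mem_sUnion.mp (hF ▸ Set.mem_univ i)
  have hf : ↑(univ.image f) ⊆ F := by simpa [Set.range_subset_iff] using hfF
  exact Nat.sInf_mem (s := {k | ∃ 𝒜 : Finset (Set (Fin n)), ↑𝒜 ⊆ F ∧
    supp x ⊆ ⋃₀ (↑𝒜 : Set (Set (Fin n))) ∧ #𝒜 = k})
    ⟨_, univ.image f, hf, fun i _ => ⟨f i, by simp, hfi i⟩, rfl⟩

variable {F : Set (Set (Fin n))}

theorem card_le_three_of_subset_union (hball : combBall F 0 2 = hammingBall 0 3)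
    {A B : Set (Fin n)} (hA : A ∈ F) (hB : B ∈ F) {S : Finset (Fin n)} (hS : ↑S ⊆ A ∪ B) :
    #S ≤ 3 := by
  classical
  rw [← mem_hammingBall_zero_indicatorVector, ← hball, mem_combBall_zero]
  refine (combWeight_le_card (𝒜 := {A, B}) ?_ ?_).trans card_le_two
  · simp [Set.insert_subset_iff, hA, hB]
  · simpa using hS

theorem exists_pair_subset_of_card_eq_three (hball : combBall F 0 2 = hammingBall 0 3)
    (hF : IsCovering F) {S : Finset (Fin n)} (hS : #S = 3) :
    ∃ A ∈ F, ∃ T ⊆ S, #T = 2 ∧ ↑T ⊆ A := by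
  classical
  have hw : combWeight F (indicatorVector S) ≤ 2 := by
    rw [← mem_combBall_zero, hball, mem_hammingBall_zero_indicatorVector, hS]
  obtain ⟨𝒜, h𝒜F, hcover, hcard⟩ := exists_card_eq_combWeight hF (indicatorVector S)
  rw [supp_indicatorVector] at hcover
  obtain ⟨A, hA, hT⟩ := exists_subset_card_eq_two_subset_of_card_lt hcover (by omega)
  exact ⟨A, h𝒜F hA, hT⟩

end CombinatorialMetric

theorem stmt_19 :
    ¬ ∃ F : Set (Set (Fin 6)), IsCovering F ∧
      combBall F 0 2 = hammingBall (0 : V 6) 3 := by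
  rintro ⟨F, hF, hball⟩
  obtain ⟨A, hA, T, hTS, hT, hTA⟩ :=
    exists_pair_subset_of_card_eq_three hball hF (S := {0, 1, 2}) rfl
  obtain ⟨B, hB, U, hUS, hU, hUB⟩ :=
    exists_pair_subset_of_card_eq_three hball hF (S := {3, 4, 5}) rfl
  have hdisj : Disjoint T U :=
    disjoint_of_subset_left hTS (disjoint_of_subset_right hUS (by decide))
  have hTU : ↑(T ∪ U) ⊆ A ∪ B := by
    rw [coe_union]
    exact Set.union_subset_union hTA hUB
  have := card_le_three_of_subset_union hball hA hB hTU
  rw [card_union_of_disjoint hdisj] at this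
  omega
end
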